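/- arXiv:2103.09157 — 3 statements merged into one kernel-verified Lean document; each statement's English description precedes it below -/
import Mathlib

section
/- For all p = (p1, p2) in ℝ² with p1 ≥ exp(-1 - c2/c1) (where c1, c3 > 0 and c2 ∈ ℝ), the determinant of the Hessian of Ψ(p) = c1|p|log|p| + c2|p| + c3|p|³ is nonnegative. Explicitly, writing L = c1·log|p| + c2, one has [L·p2² + 3c3|p|²p2² + (c1+6c3p1²)|p|²] · [L·p1² + 3c3|p|²p1² + (c1+6c3p2²)|p|²] − [(L − 3c3|p|²)p1p2]² ≥ 0. -/
/-!
With `s = |p|²` and `A = c1 log |p| + c2`, the Hessian determinant factors as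
`s² (c1 + 6 c3 s) (A + c1 + 3 c3 s)`. The first two factors are positive since `c1, c3 > 0`, and
on `K₋₁` the last one is too, because `|p| ≥ p1 ≥ exp(-1 - c2/c1)` gives `A + c1 ≥ 0`.
-/

theorem hessianDet_eq_factor (c1 c3 A p1 p2 : ℝ) :
    (A * p2 ^ 2 + 3 * c3 * (p1 ^ 2 + p2 ^ 2) * p2 ^ 2
          + (c1 + 6 * c3 * p1 ^ 2) * (p1 ^ 2 + p2 ^ 2))
        * (A * p1 ^ 2 + 3 * c3 * (p1 ^ 2 + p2 ^ 2) * p1 ^ 2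
          + (c1 + 6 * c3 * p2 ^ 2) * (p1 ^ 2 + p2 ^ 2))
      - ((A - 3 * c3 * (p1 ^ 2 + p2 ^ 2)) * p1 * p2) ^ 2
      = (p1 ^ 2 + p2 ^ 2) ^ 2 * (c1 + 6 * c3 * (p1 ^ 2 + p2 ^ 2))
        * (A + c1 + 3 * c3 * (p1 ^ 2 + p2 ^ 2)) := by
  ring

theorem mul_log_add_add_nonneg_of_exp_le {c1 c2 r : ℝ} (hc1 : 0 < c1)
    (hr : Real.exp (-1 - c2 / c1) ≤ r) : 0 ≤ c1 * Real.log r + c2 + c1 := by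
  have hlog : -1 - c2 / c1 ≤ Real.log r :=
    (Real.le_log_iff_exp_le ((Real.exp_pos _).trans_le hr)).mpr hr
  have : c1 * (-1 - c2 / c1) = -c1 - c2 := by field_simp
  nlinarith [mul_le_mul_of_nonneg_left hlog hc1.le]

/-- nonnegativity of the Hessian determinant of
`Ψ(p) = c1|p|log|p| + c2|p| + c3|p|³` on `K₋₁ = {p : p1 ≥ exp(-1 - c2/c1)}`. -/
theorem stmt1 (c1 c2 c3 p1 p2 : ℝ) (hc1 : 0 < c1) (hc3 : 0 < c3)
    (hp : Real.exp (-1 - c2 / c1) ≤ p1) :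
    0 ≤ ((c1 * Real.log (Real.sqrt (p1 ^ 2 + p2 ^ 2)) + c2) * p2 ^ 2
          + 3 * c3 * Real.sqrt (p1 ^ 2 + p2 ^ 2) ^ 2 * p2 ^ 2
          + (c1 + 6 * c3 * p1 ^ 2) * Real.sqrt (p1 ^ 2 + p2 ^ 2) ^ 2)
        * ((c1 * Real.log (Real.sqrt (p1 ^ 2 + p2 ^ 2)) + c2) * p1 ^ 2
          + 3 * c3 * Real.sqrt (p1 ^ 2 + p2 ^ 2) ^ 2 * p1 ^ 2
          + (c1 + 6 * c3 * p2 ^ 2) * Real.sqrt (p1 ^ 2 + p2 ^ 2) ^ 2)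
      - (((c1 * Real.log (Real.sqrt (p1 ^ 2 + p2 ^ 2)) + c2)
          - 3 * c3 * Real.sqrt (p1 ^ 2 + p2 ^ 2) ^ 2) * p1 * p2) ^ 2 := by
  have hp1_le_norm : p1 ≤ Real.sqrt (p1 ^ 2 + p2 ^ 2) :=
    Real.le_sqrt_of_sq_le (le_add_of_nonneg_right (sq_nonneg p2))
  have hlog := mul_log_add_add_nonneg_of_exp_le (c2 := c2) hc1 (hp.trans hp1_le_norm)
  rw [Real.sq_sqrt (by positivity), hessianDet_eq_factor]
  have hlast : 0 ≤ c1 * Real.log (Real.sqrt (p1 ^ 2 + p2 ^ 2)) + c2 + c1 + 3 * c3 * (p1 ^ 2 + p2 ^ 2) :=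
    add_nonneg hlog (by positivity)
  positivity
end

section
/- λ-convexity Hessian diagonal bound: Let c1, c3 > 0 and p = (p1,p2) ∈ ℝ² with |p| > 0, and suppose c1 log|p| + c2 ≥ 9c1 (i.e., p lies where log|p| ≥ 9 − c2/c1). Then (1/|p|³)[c1 p2² log|p| + c2 p2² + c1|p|² + 3c3(2p1² + p2²)|p|²] ≥ 2√(5c1c3), and symmetrically with p1, p2 exchanged. -/
/-!
Write `t = |p|`, `x = p₂²`, `y = p₁²` and `L = c₁ log t + c₂ ≥ 9 c₁`. Multiplied by `t³`, the
entry is at least `a + b t²` with `a = c₁ (9x + t²)` and `b = 3 c₃ (2y + x)`, and AM-GM gives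
`a + b t² ≥ 2 √(ab) t`. Since `x + y = t²`, `(10x + y)(x + 2y) ≥ 2 (x + y)²` shows `ab ≥ 6 c₁ c₃ t⁴`,
which beats the required `5 c₁ c₃ t⁴`.
-/

open Real

lemma two_mul_sqrt_mul_mul_le_add {a b : ℝ} (ha : 0 ≤ a) (hb : 0 ≤ b) (t : ℝ) :
    2 * √(a * b) * t ≤ a + b * t ^ 2 := by
  rw [sqrt_mul ha]
  nlinarith [sq_nonneg (√a - √b * t), sq_sqrt ha, sq_sqrt hb]

lemma two_mul_sqrt_le_of_add_eq_sq {c1 c3 L t x y : ℝ} (hc1 : 0 ≤ c1) (hc3 : 0 ≤ c3)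
    (ht : 0 < t) (hL : 9 * c1 ≤ L) (hx : 0 ≤ x) (hy : 0 ≤ y) (hxy : x + y = t ^ 2) :
    2 * √(5 * c1 * c3) ≤ (1 / t ^ 3) * (L * x + c1 * t ^ 2 + 3 * c3 * (2 * y + x) * t ^ 2) := by
  set a := c1 * (9 * x + t ^ 2)
  set b := 3 * c3 * (2 * y + x)
  have hab : 5 * c1 * c3 * (t ^ 2) ^ 2 ≤ a * b := by
    have hprod : a * b = 3 * (c1 * c3) * ((10 * x + y) * (x + 2 * y)) := by
      simp only [a, b]; rw [← hxy]; ring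
    rw [hprod, ← hxy]
    have hc : 0 ≤ c1 * c3 := mul_nonneg hc1 hc3
    nlinarith [mul_nonneg hc (mul_nonneg hx hy), mul_nonneg hc (sq_nonneg x),
      mul_nonneg hc (sq_nonneg y)]
  have hsqrt : √(5 * c1 * c3) * t ^ 2 ≤ √(a * b) := by
    calc √(5 * c1 * c3) * t ^ 2 = √(5 * c1 * c3 * (t ^ 2) ^ 2) := by
          rw [sqrt_mul (by positivity) ((t ^ 2) ^ 2), sqrt_sq (by positivity)]
      _ ≤ √(a * b) := sqrt_le_sqrt hab
  have hLx : a ≤ L * x + c1 * t ^ 2 := by nlinarith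
  rw [one_div, inv_mul_eq_div, le_div_iff₀ (by positivity)]
  calc 2 * √(5 * c1 * c3) * t ^ 3 = 2 * (√(5 * c1 * c3) * t ^ 2) * t := by ring
    _ ≤ 2 * √(a * b) * t := by gcongr
    _ ≤ a + b * t ^ 2 := two_mul_sqrt_mul_mul_le_add (by positivity) (by positivity) t
    _ ≤ L * x + c1 * t ^ 2 + 3 * c3 * (2 * y + x) * t ^ 2 := by linarith

/-- λ-convexity Hessian diagonal bound: if `c1 log|p| + c2 ≥ 9c1` and
`|p| > 0`, then both diagonal Hessian entries of the shifted density are at least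
`2√(5c1c3)`. -/
theorem stmt16 (c1 c2 c3 p1 p2 : ℝ) (hc1 : 0 < c1) (hc3 : 0 < c3)
    (hp : 0 < Real.sqrt (p1 ^ 2 + p2 ^ 2))
    (hlog : 9 * c1 ≤ c1 * Real.log (Real.sqrt (p1 ^ 2 + p2 ^ 2)) + c2) :
    2 * Real.sqrt (5 * c1 * c3)
        ≤ (1 / Real.sqrt (p1 ^ 2 + p2 ^ 2) ^ 3) *
            (c1 * p2 ^ 2 * Real.log (Real.sqrt (p1 ^ 2 + p2 ^ 2)) + c2 * p2 ^ 2
              + c1 * Real.sqrt (p1 ^ 2 + p2 ^ 2) ^ 2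
              + 3 * c3 * (2 * p1 ^ 2 + p2 ^ 2) * Real.sqrt (p1 ^ 2 + p2 ^ 2) ^ 2) ∧
      2 * Real.sqrt (5 * c1 * c3)
        ≤ (1 / Real.sqrt (p1 ^ 2 + p2 ^ 2) ^ 3) *
            (c1 * p1 ^ 2 * Real.log (Real.sqrt (p1 ^ 2 + p2 ^ 2)) + c2 * p1 ^ 2
              + c1 * Real.sqrt (p1 ^ 2 + p2 ^ 2) ^ 2
              + 3 * c3 * (2 * p2 ^ 2 + p1 ^ 2) * Real.sqrt (p1 ^ 2 + p2 ^ 2) ^ 2) := by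
  have ht2 : √(p1 ^ 2 + p2 ^ 2) ^ 2 = p1 ^ 2 + p2 ^ 2 := sq_sqrt (by positivity)
  constructor
  · convert two_mul_sqrt_le_of_add_eq_sq hc1.le hc3.le hp hlog (sq_nonneg p2) (sq_nonneg p1)
      (by linarith) using 2
    ring
  · convert two_mul_sqrt_le_of_add_eq_sq hc1.le hc3.le hp hlog (sq_nonneg p1) (sq_nonneg p2)
      (by linarith) using 2
    ring
end

section
/- Hessian determinant bound for the shifted density: Let c1, c3 > 0, c2 ∈ ℝ, and p = (p1,p2) ∈ ℝ² with c1 log|p| + c2 ≥ 9c1 and |p| > 0. Writing r = |p| and Λ = c1 log r + c2, one has r²Λ(c1r² + 6c3r⁴ − 2√(5c1c3) r³) + 29c1c3 r⁶ + 18c3² r⁸ + c1² r⁴ − 2√(5c1c3) r⁵(2c1 + 9c3 r²) ≥ 0. -/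
/-!
The cubic factor `c1 r² + 6 c3 r⁴ - 2 s r³ = r² (6 c3 r² - 2 s r + c1)`, with `s = √(5 c1 c3)`,
is nonnegative because its quadratic part has negative discriminant `4 s² - 24 c1 c3`.
Hence `Λ` may be replaced by its lower bound `9 c1`, after which the expression is the sum of
squares `(9/2) r⁶ (2 c3 r - s)² + (1/10) r⁴ (10 c1 - 11 s r)²`: the two AM-GM bounds of the paper.
-/

lemma quadratic_nonneg_of_sq_le_mul {a b c : ℝ} (ha : 0 < a) (h : b ^ 2 ≤ a * c) (x : ℝ) :
    0 ≤ a * x ^ 2 - 2 * b * x + c := by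
  have hscaled : 0 ≤ a * (a * x ^ 2 - 2 * b * x + c) := by
    nlinarith [sq_nonneg (a * x - b)]
  exact (mul_nonneg_iff_of_pos_left ha).mp hscaled

lemma cubic_factor_nonneg {c1 c3 s : ℝ} (hc3 : 0 < c3) (hs : s ^ 2 ≤ 6 * c1 * c3) (r : ℝ) :
    0 ≤ c1 * r ^ 2 + 6 * c3 * r ^ 4 - 2 * s * r ^ 3 := by
  have hquad := quadratic_nonneg_of_sq_le_mul (by positivity : 0 < 6 * c3)
    (by linarith : s ^ 2 ≤ 6 * c3 * c1) r
  calc 0 ≤ r ^ 2 * (6 * c3 * r ^ 2 - 2 * s * r + c1) := mul_nonneg (sq_nonneg r) hquad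
    _ = c1 * r ^ 2 + 6 * c3 * r ^ 4 - 2 * s * r ^ 3 := by ring

lemma hessian_det_nonneg {c1 c3 s r L : ℝ} (hc1 : 0 ≤ c1) (hc3 : 0 < c3)
    (hs : s ^ 2 = 5 * c1 * c3) (hL : 9 * c1 ≤ L) :
    0 ≤ r ^ 2 * L * (c1 * r ^ 2 + 6 * c3 * r ^ 4 - 2 * s * r ^ 3)
        + 29 * c1 * c3 * r ^ 6 + 18 * c3 ^ 2 * r ^ 8 + c1 ^ 2 * r ^ 4
        - 2 * s * r ^ 5 * (2 * c1 + 9 * c3 * r ^ 2) := by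
  have hA : 0 ≤ c1 * r ^ 2 + 6 * c3 * r ^ 4 - 2 * s * r ^ 3 :=
    cubic_factor_nonneg hc3 (by linarith [mul_nonneg hc1 hc3.le]) r
  calc 0 ≤ 9 / 2 * r ^ 6 * (2 * c3 * r - s) ^ 2 + 1 / 10 * r ^ 4 * (10 * c1 - 11 * s * r) ^ 2 :=
        by positivity
    _ = r ^ 2 * (9 * c1) * (c1 * r ^ 2 + 6 * c3 * r ^ 4 - 2 * s * r ^ 3)
        + 29 * c1 * c3 * r ^ 6 + 18 * c3 ^ 2 * r ^ 8 + c1 ^ 2 * r ^ 4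
        - 2 * s * r ^ 5 * (2 * c1 + 9 * c3 * r ^ 2) := by
        linear_combination (83 / 5 * r ^ 6) * hs
    _ ≤ _ := by gcongr

theorem stmt18_general (c1 c2 c3 p1 p2 : ℝ) (hc1 : 0 < c1) (hc3 : 0 < c3)
    (hlog : 9 * c1 ≤ c1 * Real.log (Real.sqrt (p1 ^ 2 + p2 ^ 2)) + c2) :
    0 ≤ Real.sqrt (p1 ^ 2 + p2 ^ 2) ^ 2 *
          (c1 * Real.log (Real.sqrt (p1 ^ 2 + p2 ^ 2)) + c2) *
          (c1 * Real.sqrt (p1 ^ 2 + p2 ^ 2) ^ 2 + 6 * c3 * Real.sqrt (p1 ^ 2 + p2 ^ 2) ^ 4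
            - 2 * Real.sqrt (5 * c1 * c3) * Real.sqrt (p1 ^ 2 + p2 ^ 2) ^ 3)
        + 29 * c1 * c3 * Real.sqrt (p1 ^ 2 + p2 ^ 2) ^ 6
        + 18 * c3 ^ 2 * Real.sqrt (p1 ^ 2 + p2 ^ 2) ^ 8
        + c1 ^ 2 * Real.sqrt (p1 ^ 2 + p2 ^ 2) ^ 4
        - 2 * Real.sqrt (5 * c1 * c3) * Real.sqrt (p1 ^ 2 + p2 ^ 2) ^ 5 *
            (2 * c1 + 9 * c3 * Real.sqrt (p1 ^ 2 + p2 ^ 2) ^ 2) :=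
  hessian_det_nonneg hc1.le hc3 (Real.sq_sqrt (by positivity)) hlog

/-- Hessian determinant bound for the shifted density: with `r = |p| > 0`
and `Λ = c1 log r + c2 ≥ 9c1`,
`r²Λ(c1r² + 6c3r⁴ − 2√(5c1c3)r³) + 29c1c3r⁶ + 18c3²r⁸ + c1²r⁴
  − 2√(5c1c3)r⁵(2c1 + 9c3r²) ≥ 0`. -/
theorem stmt18 (c1 c2 c3 p1 p2 : ℝ) (hc1 : 0 < c1) (hc3 : 0 < c3)
    (hp : 0 < Real.sqrt (p1 ^ 2 + p2 ^ 2))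
    (hlog : 9 * c1 ≤ c1 * Real.log (Real.sqrt (p1 ^ 2 + p2 ^ 2)) + c2) :
    0 ≤ Real.sqrt (p1 ^ 2 + p2 ^ 2) ^ 2 *
          (c1 * Real.log (Real.sqrt (p1 ^ 2 + p2 ^ 2)) + c2) *
          (c1 * Real.sqrt (p1 ^ 2 + p2 ^ 2) ^ 2 + 6 * c3 * Real.sqrt (p1 ^ 2 + p2 ^ 2) ^ 4
            - 2 * Real.sqrt (5 * c1 * c3) * Real.sqrt (p1 ^ 2 + p2 ^ 2) ^ 3)
        + 29 * c1 * c3 * Real.sqrt (p1 ^ 2 + p2 ^ 2) ^ 6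
        + 18 * c3 ^ 2 * Real.sqrt (p1 ^ 2 + p2 ^ 2) ^ 8
        + c1 ^ 2 * Real.sqrt (p1 ^ 2 + p2 ^ 2) ^ 4
        - 2 * Real.sqrt (5 * c1 * c3) * Real.sqrt (p1 ^ 2 + p2 ^ 2) ^ 5 *
            (2 * c1 + 9 * c3 * Real.sqrt (p1 ^ 2 + p2 ^ 2) ^ 2) :=
  stmt18_general c1 c2 c3 p1 p2 hc1 hc3 hlog
end
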